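/- arXiv:2101.00516 — 2 statements merged into one kernel-verified Lean document; each statement's English description precedes it below -/
import Mathlib

section
/- If Y follows the standard q-Gaussian N_q(0,1) with 1 ≤ q < 5/3, then the second moment E(Y²) = (3-q)/(5-3q). -/
/-!
For `1 < q` write `p = 1/(q-1)`, so that `e_q(-x²) = (1 + (q-1)x²)^(-p)`. Then
`x ↦ x (1 + (q-1)x²)^(1-p)` has derivative `e_q(-x²) - (5-3q) x² e_q(-x²)` and, because
`q < 5/3`, tends to `0` at `±∞`; integrating gives `C_q = (5-3q) ∫ x² e_q(-x²)`, and the same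
integration by parts against `x e^{-x²}` gives this at `q = 1`. Substituting `x = √β y` in the
second moment leaves `β⁻¹ ∫ x² e_q(-x²) / C_q = (3-q)/(5-3q)`.
-/
open MeasureTheory

/-- q-exponential (with cutoff), reducing to exp at q = 1. -/
noncomputable def qExp (q x : ℝ) : ℝ :=
  if q = 1 then Real.exp x else (max 0 (1 + (1 - q) * x)) ^ (1 / (1 - q))

/-- Normalizing constant C_q = ∫ e_q(-x²) dx. -/
noncomputable def Cq (q : ℝ) : ℝ := ∫ x : ℝ, qExp q (-(x ^ 2))

/-- q-Gaussian density N_q(m,σ²) with β = 1/(3-q). -/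
noncomputable def qGauss (q m σ x : ℝ) : ℝ :=
  Real.sqrt (1 / (3 - q)) / (σ * Cq q) * qExp q (-((1 / (3 - q)) * (x - m) ^ 2 / σ ^ 2))

open Real Filter Topology

section PowerDecay

variable {c : ℝ}

theorem integrable_one_add_mul_sq_rpow_neg (hc : 0 < c) {s : ℝ} (hs : 1 / 2 < s) :
    Integrable fun y : ℝ => (1 + c * y ^ 2) ^ (-s) := by
  have h : Integrable fun x : ℝ => (1 + ‖x‖ ^ 2) ^ (-(2 * s) / 2) :=
    integrable_rpow_neg_one_add_norm_sq (by simp only [Module.finrank_self, Nat.cast_one]; linarith)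
  simpa [norm_eq_abs, sq_abs, mul_pow, sq_sqrt hc.le, neg_div]
    using h.comp_mul_left' (sqrt_pos.2 hc).ne'

theorem integrable_sq_mul_one_add_mul_sq_rpow_neg (hc : 0 < c) {s : ℝ} (hs : 3 / 2 < s) :
    Integrable fun y : ℝ => y ^ 2 * (1 + c * y ^ 2) ^ (-s) := by
  refine ((integrable_one_add_mul_sq_rpow_neg hc (s := s - 1) (by linarith)).const_mul c⁻¹).mono'
    (by fun_prop) (Eventually.of_forall fun y => ?_)
  have hpos : 0 < 1 + c * y ^ 2 := by positivity
  have hsplit : (1 + c * y ^ 2) ^ (-(s - 1)) = (1 + c * y ^ 2) * (1 + c * y ^ 2) ^ (-s) := by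
    rw [show -(s - 1) = 1 + -s by ring, rpow_add hpos, rpow_one]
  rw [norm_of_nonneg (by positivity), hsplit, ← mul_assoc]
  gcongr
  rw [inv_mul_eq_div, le_div_iff₀ hc]
  linarith

theorem tendsto_mul_one_add_mul_sq_rpow_neg_atTop (hc : 0 < c) {s : ℝ} (hs : 1 / 2 < s) :
    Tendsto (fun y : ℝ => y * (1 + c * y ^ 2) ^ (-s)) atTop (𝓝 0) := by
  have hbound : Tendsto (fun y : ℝ => c ^ (-s) * y ^ (-(2 * s - 1))) atTop (𝓝 0) := by
    simpa using (tendsto_rpow_neg_atTop (y := 2 * s - 1) (by linarith)).const_mul (c ^ (-s))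
  refine squeeze_zero' ?_ ?_ hbound <;> filter_upwards [eventually_gt_atTop 0] with y hy
  · positivity
  · have hy2 : (y ^ 2) ^ (-s) = y ^ (-(2 * s)) := by
      rw [← rpow_natCast, ← rpow_mul hy.le]; push_cast; ring_nf
    calc y * (1 + c * y ^ 2) ^ (-s) ≤ y * (c * y ^ 2) ^ (-s) := by
          refine mul_le_mul_of_nonneg_left ?_ hy.le
          exact rpow_le_rpow_of_nonpos (by positivity) (by linarith) (by linarith)
      _ = c ^ (-s) * (y ^ (1 : ℝ) * y ^ (-(2 * s))) := by
          rw [mul_rpow hc.le (sq_nonneg y), hy2, rpow_one]; ring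
      _ = c ^ (-s) * y ^ (-(2 * s - 1)) := by
          rw [← rpow_add hy]; ring_nf

theorem hasDerivAt_mul_one_add_mul_sq_rpow_neg (hc : 0 ≤ c) (p y : ℝ) :
    HasDerivAt (fun y : ℝ => y * (1 + c * y ^ 2) ^ (-(p - 1)))
      ((1 + c * y ^ 2) ^ (-p) - c * (2 * p - 3) * (y ^ 2 * (1 + c * y ^ 2) ^ (-p))) y := by
  have hpos : 0 < 1 + c * y ^ 2 := by positivity
  have hinner : HasDerivAt (fun y : ℝ => 1 + c * y ^ 2) (c * (2 * y)) y := by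
    simpa using ((hasDerivAt_pow 2 y).const_mul c).const_add 1
  refine ((hasDerivAt_id y).fun_mul
    (hinner.rpow_const (p := -(p - 1)) (Or.inl hpos.ne'))).congr_deriv ?_
  rw [show -(p - 1) - 1 = -p by ring, show -(p - 1) = 1 + -p by ring, rpow_add hpos,
    rpow_one, id]
  ring

theorem integral_one_add_mul_sq_rpow_neg {p : ℝ} (hc : 0 < c) (hp : 3 / 2 < p) :
    ∫ y : ℝ, (1 + c * y ^ 2) ^ (-p) =
      c * (2 * p - 3) * ∫ y : ℝ, y ^ 2 * (1 + c * y ^ 2) ^ (-p) := by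
  have hI := integrable_one_add_mul_sq_rpow_neg hc (s := p) (by linarith)
  have hM := integrable_sq_mul_one_add_mul_sq_rpow_neg hc hp
  have hlim := tendsto_mul_one_add_mul_sq_rpow_neg_atTop hc (s := p - 1) (by linarith)
  have hlim' : Tendsto (fun y : ℝ => y * (1 + c * y ^ 2) ^ (-(p - 1))) atBot (𝓝 0) := by
    simpa using (hlim.comp tendsto_neg_atBot_atTop).neg
  have hzero := integral_of_hasDerivAt_of_tendsto
    (hasDerivAt_mul_one_add_mul_sq_rpow_neg hc.le p) (hI.sub (hM.const_mul _)) hlim' hlim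
  rw [integral_sub hI (hM.const_mul _), integral_const_mul] at hzero
  linarith

theorem hasDerivAt_mul_exp_neg_mul_sq (b x : ℝ) :
    HasDerivAt (fun x : ℝ => x * exp (-b * x ^ 2))
      (exp (-b * x ^ 2) - 2 * b * (x ^ 2 * exp (-b * x ^ 2))) x := by
  have hinner : HasDerivAt (fun x : ℝ => -b * x ^ 2) (-b * (2 * x)) x := by
    simpa using (hasDerivAt_pow 2 x).const_mul (-b)
  refine ((hasDerivAt_id x).fun_mul hinner.exp).congr_deriv ?_
  simp only [id]
  ring

theorem integral_exp_neg_mul_sq {b : ℝ} (hb : 0 < b) :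
    ∫ x : ℝ, exp (-b * x ^ 2) = 2 * b * ∫ x : ℝ, x ^ 2 * exp (-b * x ^ 2) := by
  have hI := integrable_exp_neg_mul_sq hb
  have hM : Integrable fun x : ℝ => x ^ 2 * exp (-b * x ^ 2) := by
    simpa using integrable_rpow_mul_exp_neg_mul_sq hb (s := 2) (by norm_num)
  have hzero := integral_eq_zero_of_hasDerivAt_of_integrable
    (hasDerivAt_mul_exp_neg_mul_sq b) (hI.sub (hM.const_mul _)) (integrable_mul_exp_neg_mul_sq hb)
  rw [integral_sub hI (hM.const_mul _), integral_const_mul] at hzero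
  linarith

theorem qExp_one (x : ℝ) : qExp 1 x = exp x := if_pos rfl

theorem qExp_neg_sq_of_one_lt {q : ℝ} (hq : 1 < q) (x : ℝ) :
    qExp q (-(x ^ 2)) = (1 + (q - 1) * x ^ 2) ^ (-(q - 1)⁻¹) := by
  have hbase : 1 + (1 - q) * -(x ^ 2) = 1 + (q - 1) * x ^ 2 := by ring
  have hexp : 1 / (1 - q) = -(q - 1)⁻¹ := by rw [← neg_sub, one_div, inv_neg]
  rw [qExp, if_neg hq.ne', hbase, hexp, max_eq_right (by positivity)]

theorem Cq_one : Cq 1 = sqrt π := by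
  simpa [Cq, qExp_one] using integral_gaussian 1

theorem Cq_of_one_lt {q : ℝ} (hq : 1 < q) :
    Cq q = ∫ x : ℝ, (1 + (q - 1) * x ^ 2) ^ (-(q - 1)⁻¹) := by
  simp only [Cq, qExp_neg_sq_of_one_lt hq]

theorem Cq_pos {q : ℝ} (hq1 : 1 ≤ q) (hq : q < 3) : 0 < Cq q := by
  rcases hq1.eq_or_lt with rfl | hq1
  · rw [Cq_one]; positivity
  have hc : 0 < q - 1 := by linarith
  have hbase (x : ℝ) : 0 < 1 + (q - 1) * x ^ 2 := by positivity
  rw [Cq_of_one_lt hq1]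
  refine integral_pos_of_integrable_nonneg_nonzero (x := 0) ?_
    (integrable_one_add_mul_sq_rpow_neg hc ?_) (fun x => (rpow_pos_of_pos (hbase x) _).le)
    (by simp)
  · exact (by fun_prop : Continuous fun x : ℝ => 1 + (q - 1) * x ^ 2).rpow_const
      fun x => Or.inl (hbase x).ne'
  · rw [lt_inv_comm₀ (by norm_num) hc]; linarith

theorem Cq_eq_mul_integral_sq_mul_qExp {q : ℝ} (hq1 : 1 ≤ q) (hq : q < 5 / 3) :
    Cq q = (5 - 3 * q) * ∫ x : ℝ, x ^ 2 * qExp q (-(x ^ 2)) := by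
  rcases hq1.eq_or_lt with rfl | hq1
  · norm_num [Cq, qExp_one]
    simpa using integral_exp_neg_mul_sq one_pos
  have hc : 0 < q - 1 := by linarith
  have hp : 3 / 2 < (q - 1)⁻¹ := by rw [lt_inv_comm₀ (by norm_num) hc]; linarith
  rw [Cq_of_one_lt hq1, integral_one_add_mul_sq_rpow_neg hc hp]
  simp only [qExp_neg_sq_of_one_lt hq1]
  congr 1
  field_simp
  ring

theorem integral_sq_mul_qGauss {q : ℝ} (hq : q < 3) :
    ∫ y : ℝ, y ^ 2 * qGauss q 0 1 y =
      (3 - q) * (∫ x : ℝ, x ^ 2 * qExp q (-(x ^ 2))) / Cq q := by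
  set β := 1 / (3 - q)
  have hβ : 0 < β := by simp only [β]; bound
  have hscale : ∀ y : ℝ, y ^ 2 * qGauss q 0 1 y =
      sqrt β / Cq q * β⁻¹ * ((sqrt β * y) ^ 2 * qExp q (-((sqrt β * y) ^ 2))) := by
    intro y
    simp only [qGauss, mul_pow, sq_sqrt hβ.le, sub_zero, one_pow, div_one, one_mul]
    change y ^ 2 * (sqrt β / Cq q * qExp q (-(β * y ^ 2))) = _
    field_simp
  simp only [hscale, integral_const_mul, smul_eq_mul, abs_inv, abs_of_pos (sqrt_pos.2 hβ),
    Measure.integral_comp_mul_left (fun x => x ^ 2 * qExp q (-(x ^ 2)))]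
  have hβinv : β⁻¹ = 3 - q := by simp [β]
  rw [hβinv]
  field_simp [(sqrt_pos.2 hβ).ne']

theorem qGauss_second_moment (q : ℝ) (hq1 : 1 ≤ q) (hq : q < 5 / 3) :
    (∫ y : ℝ, y ^ 2 * qGauss q 0 1 y) = (3 - q) / (5 - 3 * q) := by
  have h53 : 0 < 5 - 3 * q := by linarith
  have hC := Cq_pos hq1 (by linarith)
  rw [Cq_eq_mul_integral_sq_mul_qExp hq1 hq] at hC
  rw [integral_sq_mul_qGauss (by linarith), Cq_eq_mul_integral_sq_mul_qExp hq1 hq]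
  field_simp [(pos_of_mul_pos_right hC h53.le).ne']
end PowerDecay
end

section
/- If Y follows the standard q-Gaussian N_q(0,1) with 1 ≤ q < 3, then the normalized q-kurtosis (∫ y⁴ f^{4q-3}/ν_{4q-3} dy)/(∫ y² f^{2q-1}/ν_{2q-1} dy)² = 3(q+1)²/((5q-3)(3q-1)). -/
open MeasureTheory

open Real Set

section Helpers


lemma integrable_of_symm_abs {f : ℝ → ℝ} (hm : Continuous f)
    (hsymm : ∀ y, |f (-y)| = |f y|) (h : IntegrableOn f (Ici 0)) : Integrable f := by
  rw [← integrableOn_univ, ← Set.Iio_union_Ici (a := (0:ℝ)), integrableOn_union]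
  refine ⟨?_, h⟩
  rw [← (Measure.measurePreserving_neg (volume : Measure ℝ)).integrableOn_comp_preimage
      (Homeomorph.neg ℝ).measurableEmbedding]
  simp only [Function.comp_def, neg_preimage, neg_Iio, neg_zero]
  apply Integrable.mono' ((h.mono_set Ioi_subset_Ici_self).abs)
  · exact (hm.comp continuous_neg).aestronglyMeasurable.restrict
  · filter_upwards with x
    rw [Real.norm_eq_abs, hsymm x]

lemma integrable_pow_mul_rpow {c s : ℝ} (hc : 0 < c) (k : ℕ) (hk : (k:ℝ) < 2*s - 1) :
    Integrable fun y : ℝ => y ^ k * (1 + c * y ^ 2) ^ (-s) := by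
  have hs0 : 0 < s := by
    have : (0:ℝ) ≤ k := Nat.cast_nonneg k
    linarith
  have hpos : ∀ y : ℝ, 0 < 1 + c * y ^ 2 := fun y => by positivity
  have hcont : Continuous fun y : ℝ => y ^ k * (1 + c * y ^ 2) ^ (-s) :=
    (continuous_pow k).mul
      (Continuous.rpow_const (by continuity) (fun y => Or.inl (hpos y).ne'))
  apply integrable_of_symm_abs hcont
  · intro y; simp [abs_mul, abs_pow, abs_neg, neg_sq]
  · rw [← Icc_union_Ioi_eq_Ici (zero_le_one (α := ℝ)), integrableOn_union]
    constructor
    · exact hcont.continuousOn.integrableOn_compact isCompact_Icc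
    · apply Integrable.mono'
        (g := fun y : ℝ => c ^ (-s) * y ^ ((k:ℝ) - 2*s))
        (((integrableOn_Ioi_rpow_of_lt (by linarith) one_pos).const_mul _))
        hcont.aestronglyMeasurable.restrict
      filter_upwards [ae_restrict_mem measurableSet_Ioi] with x hx
      have hx1 : (1:ℝ) < x := hx
      have hx0 : (0:ℝ) < x := lt_trans one_pos hx1
      rw [Real.norm_eq_abs, abs_mul, abs_pow, abs_of_pos hx0,
        abs_of_pos (rpow_pos_of_pos (hpos x) _)]
      have h1 : (1 + c * x ^ 2) ^ (-s) ≤ (c * x ^ 2) ^ (-s) :=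
        rpow_le_rpow_of_nonpos (by positivity) (by linarith) (by linarith)
      calc x ^ k * (1 + c * x ^ 2) ^ (-s) ≤ x ^ k * (c * x ^ 2) ^ (-s) := by
            exact mul_le_mul_of_nonneg_left h1 (by positivity)
        _ = c ^ (-s) * x ^ ((k:ℝ) - 2*s) := by
            rw [mul_rpow hc.le (by positivity), ← rpow_natCast x k, ← rpow_natCast x 2,
              ← rpow_mul hx0.le, mul_left_comm, ← rpow_add hx0]
            push_cast
            ring_nf


lemma integral_rpow_pos {c s : ℝ} (hc : 0 < c) (hs : 1/2 < s) :
    0 < ∫ y : ℝ, (1 + c * y ^ 2) ^ (-s) := by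
  have hint : Integrable fun y : ℝ => (1 + c * y ^ 2) ^ (-s) := by
    simpa using integrable_pow_mul_rpow hc 0 (by push_cast; linarith)
  rw [integral_pos_iff_support_of_nonneg_ae
    (Filter.Eventually.of_forall fun y => (rpow_pos_of_pos (by positivity) _).le) hint]
  have : Function.support (fun y : ℝ => (1 + c * y ^ 2) ^ (-s)) = Set.univ := by
    ext y
    simpa [Function.mem_support] using (rpow_pos_of_pos (by positivity : (0:ℝ) < 1 + c*y^2) (-s)).ne'
  rw [this, Real.volume_univ]
  exact ENNReal.zero_lt_top

lemma rel_two {c s : ℝ} (hc : 0 < c) (hs : 2 < s) :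
    (∫ y : ℝ, (1 + c * y ^ 2) ^ (-s)) =
      c * (2 * s - 3) * ∫ y : ℝ, y ^ 2 * (1 + c * y ^ 2) ^ (-s) := by
  have hpos : ∀ y : ℝ, 0 < 1 + c * y ^ 2 := fun y => by positivity
  have i0 : Integrable fun y : ℝ => (1 + c * y ^ 2) ^ (-s) := by
    simpa using integrable_pow_mul_rpow hc 0 (by push_cast; linarith)
  have i2 : Integrable fun y : ℝ => y ^ 2 * (1 + c * y ^ 2) ^ (-s) :=
    integrable_pow_mul_rpow hc 2 (by push_cast; linarith)
  have iF : Integrable fun y : ℝ => y * (1 + c * y ^ 2) ^ (-(s-1)) := by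
    simpa using integrable_pow_mul_rpow hc 1 (show (1:ℕ) < 2*(s-1)-1 by push_cast; linarith)
  have hzero : ∫ y : ℝ,
      ((1 + c * y ^ 2) ^ (-s) - c * (2 * s - 3) * (y ^ 2 * (1 + c * y ^ 2) ^ (-s))) = 0 := by
    apply integral_eq_zero_of_hasDerivAt_of_integrable
      (f := fun y : ℝ => y * (1 + c * y ^ 2) ^ (-(s-1)))
    · intro x
      have h1 : HasDerivAt (fun y : ℝ => 1 + c * y ^ 2) (2 * c * x) x := by
        have := ((hasDerivAt_pow 2 x).const_mul c).const_add 1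
        convert this using 1
        any_goals rfl
        ring
      have h2 : HasDerivAt (fun y : ℝ => (1 + c * y ^ 2) ^ (-(s-1)))
          ((-(s-1)) * (1 + c * x ^ 2) ^ (-(s-1)-1) * (2 * c * x)) x := by
        exact (Real.hasDerivAt_rpow_const (p := -(s-1)) (Or.inl (hpos x).ne')).comp x h1
      have h3 := (hasDerivAt_id x).mul h2
      convert h3 using 1
      any_goals rfl
      have e1 : (1 + c * x ^ 2) ^ (-(s-1)) = (1 + c * x ^ 2) * (1 + c * x ^ 2) ^ (-s) := by
        rw [show -(s-1) = 1 + -s by ring, rpow_add (hpos x), rpow_one]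
      have e2 : (-(s-1)) - 1 = -s := by ring
      rw [e2, e1]
      simp only [id_eq]
      ring
    · exact i0.sub (i2.const_mul _)
    · exact iF
  rw [integral_sub i0 (i2.const_mul _), integral_const_mul] at hzero
  linarith

lemma rel_four {c s : ℝ} (hc : 0 < c) (hs : 3 < s) :
    3 * (∫ y : ℝ, y ^ 2 * (1 + c * y ^ 2) ^ (-s)) =
      c * (2 * s - 5) * ∫ y : ℝ, y ^ 4 * (1 + c * y ^ 2) ^ (-s) := by
  have hpos : ∀ y : ℝ, 0 < 1 + c * y ^ 2 := fun y => by positivity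
  have i2 : Integrable fun y : ℝ => y ^ 2 * (1 + c * y ^ 2) ^ (-s) :=
    integrable_pow_mul_rpow hc 2 (by push_cast; linarith)
  have i4 : Integrable fun y : ℝ => y ^ 4 * (1 + c * y ^ 2) ^ (-s) :=
    integrable_pow_mul_rpow hc 4 (by push_cast; linarith)
  have iF : Integrable fun y : ℝ => y ^ 3 * (1 + c * y ^ 2) ^ (-(s-1)) :=
    integrable_pow_mul_rpow hc 3 (by push_cast; linarith)
  have hzero : ∫ y : ℝ,
      (3 * (y ^ 2 * (1 + c * y ^ 2) ^ (-s)) -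
        c * (2 * s - 5) * (y ^ 4 * (1 + c * y ^ 2) ^ (-s))) = 0 := by
    apply integral_eq_zero_of_hasDerivAt_of_integrable
      (f := fun y : ℝ => y ^ 3 * (1 + c * y ^ 2) ^ (-(s-1)))
    · intro x
      have h1 : HasDerivAt (fun y : ℝ => 1 + c * y ^ 2) (2 * c * x) x := by
        have := ((hasDerivAt_pow 2 x).const_mul c).const_add 1
        convert this using 1
        any_goals rfl
        ring
      have h2 : HasDerivAt (fun y : ℝ => (1 + c * y ^ 2) ^ (-(s-1)))
          ((-(s-1)) * (1 + c * x ^ 2) ^ (-(s-1)-1) * (2 * c * x)) x := by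
        exact (Real.hasDerivAt_rpow_const (p := -(s-1)) (Or.inl (hpos x).ne')).comp x h1
      have h3 := (hasDerivAt_pow 3 x).mul h2
      convert h3 using 1
      any_goals rfl
      have e1 : (1 + c * x ^ 2) ^ (-(s-1)) = (1 + c * x ^ 2) * (1 + c * x ^ 2) ^ (-s) := by
        rw [show -(s-1) = 1 + -s by ring, rpow_add (hpos x), rpow_one]
      have e2 : (-(s-1)) - 1 = -s := by ring
      rw [e2, e1]
      push_cast
      ring
    · exact (i2.const_mul _).sub (i4.const_mul _)
    · exact iF
  rw [integral_sub (i2.const_mul _) (i4.const_mul _), integral_const_mul, integral_const_mul]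
    at hzero
  linarith


lemma integrable_pow_mul_gauss {b : ℝ} (hb : 0 < b) (k : ℕ) :
    Integrable fun y : ℝ => y ^ k * Real.exp (-b * y ^ 2) := by
  apply integrable_of_symm_abs (by continuity)
  · intro y; simp [abs_mul, abs_pow, abs_neg, neg_sq]
  · rw [integrableOn_Ici_iff_integrableOn_Ioi]
    refine (integrableOn_rpow_mul_exp_neg_mul_sq hb (s := (k:ℝ))
      (by linarith [Nat.cast_nonneg (α := ℝ) k])).congr_fun (fun x hx => ?_) measurableSet_Ioi
    simp only [rpow_natCast]

lemma integral_gauss_pos {b : ℝ} (hb : 0 < b) : 0 < ∫ y : ℝ, Real.exp (-b * y ^ 2) := by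
  rw [integral_gaussian]
  exact Real.sqrt_pos.mpr (by positivity)

lemma gauss_rel_two {b : ℝ} (hb : 0 < b) :
    (∫ y : ℝ, Real.exp (-b * y ^ 2)) = 2 * b * ∫ y : ℝ, y ^ 2 * Real.exp (-b * y ^ 2) := by
  have i0 : Integrable fun y : ℝ => Real.exp (-b * y ^ 2) := by
    simpa using integrable_pow_mul_gauss hb 0
  have i2 := integrable_pow_mul_gauss hb 2
  have iF := integrable_pow_mul_gauss hb 1
  have hzero : ∫ y : ℝ,
      (Real.exp (-b * y ^ 2) - 2 * b * (y ^ 2 * Real.exp (-b * y ^ 2))) = 0 := by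
    apply integral_eq_zero_of_hasDerivAt_of_integrable
      (f := fun y : ℝ => y * Real.exp (-b * y ^ 2))
    · intro x
      have h1 : HasDerivAt (fun y : ℝ => -b * y ^ 2) (-b * (2 * x)) x := by
        simpa using ((hasDerivAt_pow 2 x).const_mul (-b))
      have h2 := h1.exp
      have h3 := (hasDerivAt_id x).mul h2
      convert h3 using 1
      any_goals rfl
      simp only [id_eq]
      ring
    · exact i0.sub (i2.const_mul _)
    · simpa using iF
  rw [integral_sub i0 (i2.const_mul _), integral_const_mul] at hzero
  linarith

lemma gauss_rel_four {b : ℝ} (hb : 0 < b) :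
    3 * (∫ y : ℝ, y ^ 2 * Real.exp (-b * y ^ 2)) =
      2 * b * ∫ y : ℝ, y ^ 4 * Real.exp (-b * y ^ 2) := by
  have i2 := integrable_pow_mul_gauss hb 2
  have i4 := integrable_pow_mul_gauss hb 4
  have iF := integrable_pow_mul_gauss hb 3
  have hzero : ∫ y : ℝ,
      (3 * (y ^ 2 * Real.exp (-b * y ^ 2)) - 2 * b * (y ^ 4 * Real.exp (-b * y ^ 2))) = 0 := by
    apply integral_eq_zero_of_hasDerivAt_of_integrable
      (f := fun y : ℝ => y ^ 3 * Real.exp (-b * y ^ 2))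
    · intro x
      have h1 : HasDerivAt (fun y : ℝ => -b * y ^ 2) (-b * (2 * x)) x := by
        simpa using ((hasDerivAt_pow 2 x).const_mul (-b))
      have h2 := h1.exp
      have h3 := (hasDerivAt_pow 3 x).mul h2
      convert h3 using 1
      any_goals rfl
      push_cast
      ring
    · exact (i2.const_mul _).sub (i4.const_mul _)
    · exact iF
  rw [integral_sub (i2.const_mul _) (i4.const_mul _), integral_const_mul, integral_const_mul]
    at hzero
  linarith


lemma moment_ratio {K : ℝ} (hK : K ≠ 0) (g : ℝ → ℝ) (k : ℕ) :
    (∫ y : ℝ, y ^ k * (K * g y / (∫ t : ℝ, K * g t))) =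
      (∫ y : ℝ, y ^ k * g y) / (∫ y : ℝ, g y) := by
  rw [integral_const_mul K g]
  have h : ∀ y : ℝ, y ^ k * (K * g y / (K * ∫ t : ℝ, g t)) =
      y ^ k * g y / (∫ t : ℝ, g t) := by
    intro y
    rw [mul_div_mul_left _ _ hK, mul_div_assoc]
  simp_rw [h]
  exact integral_div _ _

end Helpers

theorem qGauss_normalized_kurtosis (q : ℝ) (hq1 : 1 ≤ q) (hq3 : q < 3) :
    (∫ y : ℝ, y ^ 4 *
        ((qGauss q 0 1 y) ^ (4 * q - 3) / (∫ t : ℝ, (qGauss q 0 1 t) ^ (4 * q - 3)))) /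
      (∫ y : ℝ, y ^ 2 *
        ((qGauss q 0 1 y) ^ (2 * q - 1) / (∫ t : ℝ, (qGauss q 0 1 t) ^ (2 * q - 1)))) ^ 2 =
      3 * (q + 1) ^ 2 / ((5 * q - 3) * (3 * q - 1)) := by
  rcases eq_or_lt_of_le hq1 with hq | hq
  · subst hq
    have hC : Cq 1 = Real.sqrt π := by
      have hg := integral_gaussian 1
      norm_num at hg
      rw [Cq, ← hg]
      congr 1
      ext x
      simp [qExp]
    have hK : Real.sqrt (1/2) / Cq 1 ≠ 0 := by
      rw [hC]
      positivity
    have hrw : ∀ r : ℝ, ∀ y : ℝ, qGauss 1 0 1 y ^ r =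
        (Real.sqrt (1/2) / Cq 1) ^ r * Real.exp (-(1/2 : ℝ) * y ^ 2) ^ r := by
      intro r y
      rw [qGauss, ← Real.mul_rpow (by rw [hC]; positivity) (Real.exp_pos _).le]
      norm_num [qExp]
    have h41 : (4 * (1:ℝ) - 3) = 1 := by norm_num
    have h21 : (2 * (1:ℝ) - 1) = 1 := by norm_num
    simp only [h41, h21, rpow_one] at hrw ⊢
    have hrw1 : ∀ y : ℝ, qGauss 1 0 1 y =
        (Real.sqrt (1/2) / Cq 1) * Real.exp (-(1/2 : ℝ) * y ^ 2) := by
      intro y; have := hrw 1 y; simpa using this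
    simp_rw [hrw1]
    rw [moment_ratio hK _ 4, moment_ratio hK _ 2]
    have E0 := integral_gauss_pos (b := 1/2) (by norm_num)
    have h2 := gauss_rel_two (b := 1/2) (by norm_num)
    have h4 := gauss_rel_four (b := 1/2) (by norm_num)
    rw [show (2:ℝ)*(1/2) = 1 by norm_num, one_mul] at h2 h4
    set A := ∫ (y : ℝ), Real.exp (-(1/2 : ℝ) * y ^ 2) with hA
    set B := ∫ (y : ℝ), y ^ 2 * Real.exp (-(1/2 : ℝ) * y ^ 2) with hB
    set C := ∫ (y : ℝ), y ^ 4 * Real.exp (-(1/2 : ℝ) * y ^ 2) with hCC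
    rw [← h4, ← h2]
    rw [div_self (ne_of_gt E0)]
    rw [one_pow, div_one, mul_div_assoc, div_self (ne_of_gt E0)]
    norm_num
  · have hne : q ≠ 1 := ne_of_gt hq
    have hq1' : 0 < q - 1 := by linarith
    have h3q : 0 < 3 - q := by linarith
    set c : ℝ := (q - 1) / (3 - q) with hcdef
    have hc : 0 < c := div_pos hq1' h3q
    -- Cq q is positive
    have hCq : ∀ x : ℝ, qExp q (-(x ^ 2)) = (1 + (q-1) * x ^ 2) ^ (-(1/(q-1))) := by
      intro x
      rw [qExp, if_neg hne]
      rw [show 1 + (1-q) * (-(x^2)) = 1 + (q-1) * x ^ 2 by ring,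
        max_eq_right (by positivity)]
      congr 1
      rw [show (1:ℝ) - q = -(q-1) by ring, div_neg]
    have hCqpos : 0 < Cq q := by
      rw [Cq]
      simp_rw [hCq]
      exact integral_rpow_pos hq1' (by rw [lt_div_iff₀ hq1']; linarith)
    have hK : 0 < Real.sqrt (1/(3-q)) / Cq q :=
      div_pos (Real.sqrt_pos.mpr (by positivity)) hCqpos
    -- rewrite the density powers
    have hrw : ∀ r y : ℝ, qGauss q 0 1 y ^ r =
        (Real.sqrt (1/(3-q)) / Cq q) ^ r * (1 + c * y ^ 2) ^ (-(r/(q-1))) := by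
      intro r y
      rw [qGauss, one_mul]
      have harg : qExp q (-(1 / (3 - q) * (y - 0) ^ 2 / 1 ^ 2)) =
          (1 + c * y ^ 2) ^ (-(1/(q-1))) := by
        rw [qExp, if_neg hne]
        rw [show 1 + (1-q) * -(1 / (3 - q) * (y - 0) ^ 2 / 1 ^ 2) = 1 + c * y ^ 2 by
          rw [hcdef]; field_simp; ring]
        rw [max_eq_right (by positivity)]
        congr 1
        rw [show (1:ℝ) - q = -(q-1) by ring, div_neg]
      rw [harg, Real.mul_rpow hK.le (rpow_pos_of_pos (by positivity) _).le,
        ← Real.rpow_mul (by positivity)]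
      congr 1
      ring
    have hK4 : (Real.sqrt (1/(3-q)) / Cq q) ^ (4*q-3) ≠ 0 :=
      (rpow_pos_of_pos hK _).ne'
    have hK2 : (Real.sqrt (1/(3-q)) / Cq q) ^ (2*q-1) ≠ 0 :=
      (rpow_pos_of_pos hK _).ne'
    simp_rw [hrw (4*q-3), hrw (2*q-1)]
    rw [moment_ratio hK4 _ 4, moment_ratio hK2 _ 2]
    -- moment relations
    have hs4_2 : 2 < (4*q-3)/(q-1) := by rw [lt_div_iff₀ hq1']; linarith
    have hs4_3 : 3 < (4*q-3)/(q-1) := by rw [lt_div_iff₀ hq1']; linarith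
    have hs2_2 : 2 < (2*q-1)/(q-1) := by rw [lt_div_iff₀ hq1']; linarith
    have I0s4pos := integral_rpow_pos hc (lt_trans (by norm_num) hs4_2)
    have I0s2pos := integral_rpow_pos hc (lt_trans (by norm_num) hs2_2)
    have e4b : c * (2 * ((4*q-3)/(q-1)) - 3) = (5*q-3)/(3-q) := by
      rw [hcdef]; field_simp; ring
    have e4a : c * (2 * ((4*q-3)/(q-1)) - 5) = (3*q-1)/(3-q) := by
      rw [hcdef]; field_simp; ring
    have e2b : c * (2 * ((2*q-1)/(q-1)) - 3) = (q+1)/(3-q) := by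
      rw [hcdef]; field_simp; ring
    have hA : (∫ y : ℝ, (1 + c * y ^ 2) ^ (-((4*q-3)/(q-1)))) =
        (5*q-3)/(3-q) * ∫ y : ℝ, y ^ 2 * (1 + c * y ^ 2) ^ (-((4*q-3)/(q-1))) := by
      rw [rel_two hc hs4_2, e4b]
    have hB' := rel_four hc hs4_3
    rw [e4a] at hB'
    have hCc : (∫ y : ℝ, (1 + c * y ^ 2) ^ (-((2*q-1)/(q-1)))) =
        (q+1)/(3-q) * ∫ y : ℝ, y ^ 2 * (1 + c * y ^ 2) ^ (-((2*q-1)/(q-1))) := by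
      rw [rel_two hc hs2_2, e2b]
    -- nonvanishing of second moments
    have h53 : (0:ℝ) < 5*q-3 := by linarith
    have h31 : (0:ℝ) < 3*q-1 := by linarith
    have hI2s4pos : 0 < ∫ y : ℝ, y ^ 2 * (1 + c * y ^ 2) ^ (-((4*q-3)/(q-1))) := by
      by_contra h
      push_neg at h
      nlinarith [hA, I0s4pos, div_pos h53 h3q]
    have hI2s2pos : 0 < ∫ y : ℝ, y ^ 2 * (1 + c * y ^ 2) ^ (-((2*q-1)/(q-1))) := by
      by_contra h
      push_neg at h
      nlinarith [hCc, I0s2pos, div_pos (by linarith : (0:ℝ) < q+1) h3q]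
    have hB : (∫ y : ℝ, y ^ 4 * (1 + c * y ^ 2) ^ (-((4*q-3)/(q-1)))) =
        3 * (3-q)/(3*q-1) * ∫ y : ℝ, y ^ 2 * (1 + c * y ^ 2) ^ (-((4*q-3)/(q-1))) := by
      rw [div_mul_eq_mul_div, eq_div_iff (ne_of_gt h3q)] at hB'
      rw [div_mul_eq_mul_div, eq_div_iff (ne_of_gt h31)]
      linarith [hB']
    rw [hA, hB, hCc]
    generalize hgX : (∫ y : ℝ, y ^ 2 * (1 + c * y ^ 2) ^ (-((4*q-3)/(q-1)))) = X at hI2s4pos ⊢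
    generalize hgY : (∫ y : ℝ, y ^ 2 * (1 + c * y ^ 2) ^ (-((2*q-1)/(q-1)))) = Y at hI2s2pos ⊢
    have hX : X ≠ 0 := ne_of_gt hI2s4pos
    have hY : Y ≠ 0 := ne_of_gt hI2s2pos
    have d1 : (5*q-3 : ℝ) ≠ 0 := ne_of_gt h53
    have d2 : (3*q-1 : ℝ) ≠ 0 := ne_of_gt h31
    have d3 : (3-q : ℝ) ≠ 0 := ne_of_gt h3q
    have d4 : (q+1 : ℝ) ≠ 0 := by positivity
    field_simp
end
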